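/- Let V be a pseudovariety of semigroups containing J. Then for every nonempty family (S_i)_{i∈I} of one-element semigroups, the natural mapping ι : *_{i∈I} S_i → ∐^V_{i∈I} S_i from the free product to the V-coproduct is injective. -/

import Mathlib

set_option autoImplicit false

/-! ### General notions: topological semigroups, pseudovarieties, pro-V semigroups -/

/-- Continuity of a map into a type regarded with the discrete topology. -/
def ContinuousDisc {S : Type} [TopologicalSpace S] {T : Type} (f : S → T) : Prop :=
  @Continuous S T _ ⊥ f

/-- A pseudovariety of semigroups: a class of finite semigroups closed under
homomorphic images, subsemigroups and finite direct products. -/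
structure Pseudovariety : Type 1 where
  Mem : ∀ (S : Type) [Semigroup S], Prop
  finite : ∀ (S : Type) [Semigroup S], Mem S → Finite S
  closed_hom : ∀ (S T : Type) [Semigroup S] [Semigroup T] (f : S →ₙ* T),
    Mem S → Function.Surjective f → Mem T
  closed_sub : ∀ (S T : Type) [Semigroup S] [Semigroup T] (f : T →ₙ* S),
    Mem S → Function.Injective f → Mem T
  closed_prod : ∀ (ι : Type) [Finite ι] (S : ι → Type) [∀ i, Semigroup (S i)],
    (∀ i, Mem (S i)) → Mem (∀ i, S i)

/-- A bundled member of a pseudovariety `V` (a finite semigroup belonging to `V`),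
always regarded as carrying the discrete topology. -/
structure SgrIn (V : Pseudovariety) : Type 1 where
  carrier : Type
  [str : Semigroup carrier]
  mem : V.Mem carrier

attribute [instance] SgrIn.str

/-- A (bundled) topological semigroup. -/
structure TopSgr : Type 1 where
  carrier : Type
  [str : Semigroup carrier]
  [top : TopologicalSpace carrier]

attribute [instance] TopSgr.str TopSgr.top

/-- A finite semigroup regarded as a topological semigroup with the discrete topology. -/
def discTopSgr (S : Type) [Semigroup S] : TopSgr :=
  @TopSgr.mk S _ ⊥

/-- A pro-V semigroup: a compact Hausdorff topological semigroup that is residually `V`. -/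
def IsProV (V : Pseudovariety) (S : TopSgr) : Prop :=
  CompactSpace S.carrier ∧ T2Space S.carrier ∧ ContinuousMul S.carrier ∧
    ∀ x y : S.carrier, x ≠ y → ∃ (F : SgrIn V) (f : S.carrier →ₙ* F.carrier),
      ContinuousDisc ⇑f ∧ f x ≠ f y

/-- A profinite semigroup: a compact Hausdorff totally disconnected topological semigroup. -/
def IsProfiniteSgr (S : TopSgr) : Prop :=
  CompactSpace S.carrier ∧ T2Space S.carrier ∧ TotallyDisconnectedSpace S.carrier ∧
    ContinuousMul S.carrier

/-- `C`, together with the continuous homomorphisms `φ i`, is a `V`-coproduct of the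
family `S` of pro-`V` semigroups. -/
structure IsCoproduct (V : Pseudovariety) {I : Type} (S : I → TopSgr)
    (C : TopSgr) (φ : ∀ i, (S i).carrier →ₙ* C.carrier) : Prop where
  proV : IsProV V C
  cont : ∀ i, Continuous ⇑(φ i)
  universal : ∀ (T : TopSgr), IsProV V T →
    ∀ ψ : ∀ i, (S i).carrier →ₙ* T.carrier, (∀ i, Continuous ⇑(ψ i)) →
      ∃! Ψ : C.carrier →ₙ* T.carrier, Continuous ⇑Ψ ∧ ∀ i, Ψ.comp (φ i) = ψ i

/-- `P`, together with the homomorphisms `e i`, is a free product (coproduct in the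
category of semigroups) of the family `S`. -/
structure IsFreeProduct {I : Type} (S : I → Type) [∀ i, Semigroup (S i)]
    (P : Type) [Semigroup P] (e : ∀ i, S i →ₙ* P) : Prop where
  universal : ∀ (T : Type) [Semigroup T] (f : ∀ i, S i →ₙ* T),
    ∃! F : P →ₙ* T, ∀ i, F.comp (e i) = f i

/-! ### Particular pseudovarieties and related notions -/

/-- `V` contains the pseudovariety `Sl` of finite semilattices. -/
def ContainsSl (V : Pseudovariety) : Prop :=
  ∀ (S : Type) [Semigroup S] [Finite S],
    (∀ x y : S, x * y = y * x) → (∀ x : S, x * x = x) → V.Mem S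

/-- Green's `J`-preorder: `s ≤_J t`, i.e. `s ∈ S^I t S^I`. -/
def JBelow {S : Type} [Semigroup S] (s t : S) : Prop :=
  ∃ x y : WithOne S, x * (t : WithOne S) * y = (s : WithOne S)

/-- `V` contains the pseudovariety `J` of finite `J`-trivial semigroups. -/
def ContainsJ (V : Pseudovariety) : Prop :=
  ∀ (S : Type) [Semigroup S] [Finite S],
    (∀ s t : S, JBelow s t → JBelow t s → s = t) → V.Mem S

/-- The preimage of an idempotent under a semigroup homomorphism, as a subsemigroup. -/
def fiberSub {S T : Type} [Semigroup S] [Semigroup T] (ψ : S →ₙ* T) (e : T)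
    (he : e * e = e) : Subsemigroup S where
  carrier := ⇑ψ ⁻¹' {e}
  mul_mem' := by
    intro a b ha hb
    simp only [Set.mem_preimage, Set.mem_singleton_iff] at *
    rw [map_mul, ha, hb, he]

/-- The set of products of `n+1` elements of a semigroup (so `nthProds S 0 = S`). -/
def nthProds (S : Type) [Semigroup S] : ℕ → Set S
  | 0 => Set.univ
  | n + 1 => {x | ∃ a y, y ∈ nthProds S n ∧ x = a * y}

/-- A nilpotent semigroup: it has a zero `z` and some power of the semigroup is `{z}`. -/
def IsNilpotentSgr (S : Type) [Semigroup S] : Prop :=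
  ∃ z : S, (∀ x : S, z * x = z ∧ x * z = z) ∧ ∃ n : ℕ, nthProds S n ⊆ {z}

/-- A generator of the Mal'cev product `N ⓜ V`: a finite semigroup admitting a surjective
homomorphism onto a member of `V` all of whose idempotent fibers are nilpotent. -/
def NMalcevGen (V : Pseudovariety) (S : Type) [Semigroup S] : Prop :=
  Finite S ∧ ∃ (T : SgrIn V) (ψ : S →ₙ* T.carrier), Function.Surjective ψ ∧
    ∀ (e : T.carrier) (he : e * e = e), IsNilpotentSgr (fiberSub ψ e he)

/-- The equality `N ⓜ V = V`: `V` coincides with the smallest pseudovariety containing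
all finite semigroups admitting an `N`-morphism onto some member of `V`. -/
def NMalcevFixed (V : Pseudovariety) : Prop :=
  ∀ (S : Type) [Semigroup S] [Finite S],
    V.Mem S ↔ ∀ U : Pseudovariety,
      (∀ (S' : Type) [Semigroup S'], NMalcevGen V S' → U.Mem S') → U.Mem S

/-- A completely simple semigroup: simple with a primitive idempotent. -/
def IsCompletelySimple (S : Type) [Semigroup S] : Prop :=
  (∀ J : Set S, J.Nonempty → (∀ s x : S, x ∈ J → s * x ∈ J ∧ x * s ∈ J) → J = Set.univ) ∧
  ∃ e : S, e * e = e ∧ ∀ f : S, f * f = f → e * f = f → f * e = f → f = e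

/-- An equidivisible semigroup. -/
def Equidivisible (S : Type) [Semigroup S] : Prop :=
  ∀ u v x y : S, u * v = x * y →
    ∃ t : WithOne S,
      ((x : WithOne S) = (u : WithOne S) * t ∧ t * (y : WithOne S) = (v : WithOne S)) ∨
      ((x : WithOne S) * t = (u : WithOne S) ∧ (y : WithOne S) = t * (v : WithOne S))

/-! ### The two-sided Karnofsky–Rhodes expansion -/

/-- Vertices of the two-sided Cayley graph of `T`: pairs of elements of `T^I`. -/
abbrev KRVtx (T : Type) : Type := WithOne T × WithOne T

/-- Edges of the two-sided Cayley graph: (source, label, target). -/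
abbrev KREdge (A T : Type) : Type := KRVtx T × A × KRVtx T

/-- The image in `T^I` of a letter. -/
def letterImg {A T : Type} [Semigroup T] (ψ : FreeSemigroup A →ₙ* T) (a : A) : WithOne T :=
  (ψ (FreeSemigroup.of a) : WithOne T)

/-- The image in `T^I` of a (possibly empty) word. -/
def wordImg {A T : Type} [Semigroup T] (ψ : FreeSemigroup A →ₙ* T) (w : List A) : WithOne T :=
  (w.map (letterImg ψ)).prod

/-- `e` is an edge of the two-sided Cayley graph `Γ_ψ`. -/
def IsKREdge {A T : Type} [Semigroup T] (ψ : FreeSemigroup A →ₙ* T) (e : KREdge A T) : Prop :=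
  e.1.1 * letterImg ψ e.2.1 = e.2.2.1 ∧ e.1.2 = letterImg ψ e.2.1 * e.2.2.2

/-- One step along an edge of `Γ_ψ` (used to define directed paths). -/
def KRStep {A T : Type} [Semigroup T] (ψ : FreeSemigroup A →ₙ* T) (v w : KRVtx T) : Prop :=
  ∃ a : A, v.1 * letterImg ψ a = w.1 ∧ v.2 = letterImg ψ a * w.2

/-- A transition edge of `Γ_ψ`: an edge from whose target there is no directed path
back to its source. -/
def IsTransEdge {A T : Type} [Semigroup T] (ψ : FreeSemigroup A →ₙ* T) (e : KREdge A T) : Prop :=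
  IsKREdge ψ e ∧ ¬ Relation.ReflTransGen (KRStep ψ) e.2.2 e.1

/-- The list of letters of an element of the free semigroup. -/
def letters {A : Type} (u : FreeSemigroup A) : List A := u.head :: u.tail

/-- The set of edges of the path `p_u` of `Γ_ψ` from `(I, ψ u)` to `(ψ u, I)` labeled by `u`. -/
def pathEdges {A T : Type} [Semigroup T] (ψ : FreeSemigroup A →ₙ* T) (u : FreeSemigroup A) :
    Set (KREdge A T) :=
  {e | ∃ (w₁ w₂ : List A) (a : A), letters u = w₁ ++ a :: w₂ ∧
    e = ((wordImg ψ w₁, wordImg ψ (a :: w₂)), a, (wordImg ψ (w₁ ++ [a]), wordImg ψ w₂))}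

/-- The set `T(p_u)` of transition edges of `Γ_ψ` occurring in the path `p_u`. -/
def transEdges {A T : Type} [Semigroup T] (ψ : FreeSemigroup A →ₙ* T) (u : FreeSemigroup A) :
    Set (KREdge A T) :=
  {e ∈ pathEdges ψ u | IsTransEdge ψ e}

/-- A realization of the two-sided Karnofsky–Rhodes expansion of `ψ : A⁺ → T`:
a semigroup `K = T_ψ^KR` together with the projection `ψ^KR : A⁺ → K`, which is onto and
identifies `u` and `v` exactly when `ψ u = ψ v` and `T(p_u) = T(p_v)`, and the canonical
homomorphism `π : T_ψ^KR → T` with `π ∘ ψ^KR = ψ`. -/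
structure KRExp {A T : Type} [Semigroup T] (ψ : FreeSemigroup A →ₙ* T) : Type 1 where
  K : Type
  [strK : Semigroup K]
  [finK : Finite K]
  ψKR : FreeSemigroup A →ₙ* K
  π : K →ₙ* T
  surj : Function.Surjective ⇑ψKR
  ker : ∀ u v : FreeSemigroup A, ψKR u = ψKR v ↔
    (ψ u = ψ v ∧ transEdges ψ u = transEdges ψ v)
  proj : π.comp ψKR = ψ

attribute [instance] KRExp.strK KRExp.finK

/-- The data of a two-sided Karnofsky–Rhodes expansion of a finite semigroup `T`:
a finite alphabet `A`, an onto homomorphism `ψ : A⁺ → T`, and a realization `T_ψ^KR`. -/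
structure KRData (T : Type) [Semigroup T] : Type 1 where
  A : Type
  [finA : Finite A]
  ψ : FreeSemigroup A →ₙ* T
  surjψ : Function.Surjective ⇑ψ
  E : KRExp ψ

attribute [instance] KRData.finA

/-- `V` is closed under two-sided Karnofsky–Rhodes expansion. -/
def ClosedUnderKR (V : Pseudovariety) : Prop :=
  ∀ (A T : Type) [Finite A] [Semigroup T], V.Mem T →
    ∀ (ψ : FreeSemigroup A →ₙ* T), Function.Surjective ⇑ψ →
      ∀ E : KRExp ψ, V.Mem E.K

/-! ### KR-covers -/

/-- `S` is a KR-cover of the finite semigroup `T`. -/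
def IsKRCoverOf (S : TopSgr) (T : Type) [Semigroup T] [Finite T] : Prop :=
  (∃ φ : S.carrier →ₙ* T, ContinuousDisc ⇑φ ∧ Function.Surjective ⇑φ) ∧
  ∀ φ : S.carrier →ₙ* T, ContinuousDisc ⇑φ → Function.Surjective ⇑φ →
    ∃ (D : KRData T) (φψ : S.carrier →ₙ* D.E.K),
      ContinuousDisc ⇑φψ ∧ D.E.π.comp φψ = φ

/-- `S` is a KR-cover: a KR-cover of each of its finite continuous homomorphic images. -/
def IsKRCover (S : TopSgr) : Prop :=
  ∀ (T : Type) [Semigroup T] [Finite T],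
    (∃ φ : S.carrier →ₙ* T, ContinuousDisc ⇑φ ∧ Function.Surjective ⇑φ) →
    IsKRCoverOf S T

/-- `S` is `V`-projective. -/
def IsVProjective (V : Pseudovariety) (S : TopSgr) : Prop :=
  IsProV V S ∧ ∀ (T R : TopSgr), IsProV V T → IsProV V R →
    ∀ (f : S.carrier →ₙ* T.carrier) (g : R.carrier →ₙ* T.carrier),
      Continuous ⇑f → Continuous ⇑g → Function.Surjective ⇑g →
        ∃ f' : S.carrier →ₙ* R.carrier, Continuous ⇑f' ∧ g.comp f' = f

/-! ### Strong KR-covers and letter super-cancellativity -/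

/-- `κ : A → S` is a generating mapping: its image generates a dense subsemigroup. -/
def GeneratingMap {A : Type} (S : TopSgr) (κ : A → S.carrier) : Prop :=
  Dense (Subsemigroup.closure (Set.range κ) : Set S.carrier)

/-- The homomorphism `A⁺ → T` extending `a ↦ φ (κ a)`. -/
def liftGen {A : Type} (S : TopSgr) (κ : A → S.carrier) {T : Type} [Semigroup T]
    (φ : S.carrier →ₙ* T) : FreeSemigroup A →ₙ* T :=
  FreeSemigroup.lift (fun a => φ (κ a))

/-- `S` is a strong KR-cover of the finite semigroup `T` with respect to the
generating mapping `κ`. -/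
def IsStrongKRCoverOfWrt {A : Type} (S : TopSgr) (κ : A → S.carrier)
    (T : Type) [Semigroup T] [Finite T] : Prop :=
  ∀ φ : S.carrier →ₙ* T, ContinuousDisc ⇑φ → Function.Surjective ⇑φ →
    ∃ (E : KRExp (liftGen S κ φ)) (φκ : S.carrier →ₙ* E.K),
      ContinuousDisc ⇑φκ ∧ E.π.comp φκ = φ ∧
      ∀ a : A, φκ (κ a) = E.ψKR (FreeSemigroup.of a)

/-- `S` is a strong KR-cover of the finite semigroup `T` (with respect to some
generating mapping with finite domain). -/
def IsStrongKRCoverOf (S : TopSgr) (T : Type) [Semigroup T] [Finite T] : Prop :=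
  ∃ A : Type, Finite A ∧ ∃ κ : A → S.carrier, GeneratingMap S κ ∧
    IsStrongKRCoverOfWrt S κ T

/-- `S` is a strong KR-cover: a strong KR-cover of each of its finite continuous
homomorphic images. -/
def IsStrongKRCover (S : TopSgr) : Prop :=
  ∀ (T : Type) [Semigroup T] [Finite T],
    (∃ φ : S.carrier →ₙ* T, ContinuousDisc ⇑φ ∧ Function.Surjective ⇑φ) →
    IsStrongKRCoverOf S T

/-- `S` is letter super-cancellative with respect to the subset `A` of `S`. -/
def IsLSC (S : TopSgr) (A : Set S.carrier) : Prop :=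
  ∀ a ∈ A, ∀ b ∈ A, ∀ u v : WithOne S.carrier,
    (u * (a : WithOne S.carrier) = v * (b : WithOne S.carrier) → a = b ∧ u = v) ∧
    ((a : WithOne S.carrier) * u = (b : WithOne S.carrier) * v → a = b ∧ u = v)

/-! ### `S^I` and inverse limits -/

/-- The sum topology on `S^I = S ∪ {I}`: the point `I` is isolated and `S` keeps
its topology. -/
def withOneTopology (S : Type) [TopologicalSpace S] : TopologicalSpace (WithOne S) where
  IsOpen V := IsOpen ((fun s : S => (s : WithOne S)) ⁻¹' V)
  isOpen_univ := by simp
  isOpen_inter := by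
    intro U V hU hV
    rw [Set.preimage_inter]
    exact hU.inter hV
  isOpen_sUnion := by
    intro s hs
    rw [Set.preimage_sUnion]
    exact isOpen_biUnion hs

/-- `S^I` as a topological semigroup (in fact a monoid): `S` with an isolated identity
adjoined. -/
def withOneTopSgr (S : TopSgr) : TopSgr :=
  @TopSgr.mk (WithOne S.carrier) _ (withOneTopology S.carrier)

/-- The inverse limit of a family of topological semigroups, as a subsemigroup of
the product. -/
def invLimSub {I : Type} [Preorder I] (S : I → TopSgr)
    (f : ∀ i j, j ≤ i → ((S i).carrier →ₙ* (S j).carrier)) :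
    Subsemigroup (∀ i, (S i).carrier) where
  carrier := {x | ∀ i j (h : j ≤ i), f i j h (x i) = x j}
  mul_mem' := by
    intro a b ha hb i j h
    simp only [Pi.mul_apply, map_mul, ha i j h, hb i j h]

/-- The inverse limit as a topological semigroup (with the topology induced from the
product topology). -/
def invLimTopSgr {I : Type} [Preorder I] (S : I → TopSgr)
    (f : ∀ i j, j ≤ i → ((S i).carrier →ₙ* (S j).carrier)) : TopSgr :=
  TopSgr.mk (invLimSub S f)

/-!
The free product of the one-element semigroups `{i}` is the semigroup of nonempty words over `I`
without two equal adjacent letters, multiplied by concatenation followed by merging the two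
letters at the junction when they coincide. Multiplying such a word on either side either leaves
it unchanged or makes it strictly longer, so the semigroup is `J`-trivial, and so is its Rees
quotient by the ideal of words that are too long or use letters outside a finite alphabet. Two
distinct words are still distinct in such a finite quotient; it belongs to `V ⊇ J`, so by the
universal property of the `V`-coproduct the quotient map factors through `ι`, which therefore
separates the two words as well.
-/

section StrictLength

variable {M α : Type} [Preorder α]

structure IsStrictLength [Mul M] (ℓ : M → α) : Prop where
  mul_left : ∀ x y : M, x * y = y ∨ ℓ y < ℓ (x * y)
  mul_right : ∀ x y : M, x * y = x ∨ ℓ x < ℓ (x * y)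

lemma eq_or_lt_trans {ℓ : M → α} {a b c : M} (hab : a = b ∨ ℓ b < ℓ a)
    (hbc : b = c ∨ ℓ c < ℓ b) : a = c ∨ ℓ c < ℓ a := by
  rcases hab with rfl | hab
  · exact hbc
  · rcases hbc with rfl | hbc
    · exact Or.inr hab
    · exact Or.inr (hbc.trans hab)

variable [Semigroup M] {ℓ : M → α}

lemma IsStrictLength.le_mul_left (hℓ : IsStrictLength ℓ) (x y : M) : ℓ y ≤ ℓ (x * y) := by
  rcases hℓ.mul_left x y with h | h
  · rw [h]
  · exact h.le

lemma IsStrictLength.le_mul_right (hℓ : IsStrictLength ℓ) (x y : M) : ℓ x ≤ ℓ (x * y) := by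
  rcases hℓ.mul_right x y with h | h
  · rw [h]
  · exact h.le

lemma IsStrictLength.eq_or_lt_of_jBelow (hℓ : IsStrictLength ℓ) {s t : M} (h : JBelow s t) :
    s = t ∨ ℓ t < ℓ s := by
  obtain ⟨x, y, hxy⟩ := h
  induction x with
  | one =>
    induction y with
    | one => exact Or.inl (by simpa using hxy.symm)
    | coe b =>
      rw [one_mul, ← WithOne.coe_mul, WithOne.coe_inj] at hxy
      subst hxy
      exact hℓ.mul_right t b
  | coe a =>
    induction y with
    | one =>
      rw [mul_one, ← WithOne.coe_mul, WithOne.coe_inj] at hxy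
      subst hxy
      exact hℓ.mul_left a t
    | coe b =>
      rw [← WithOne.coe_mul, ← WithOne.coe_mul, WithOne.coe_inj] at hxy
      subst hxy
      exact eq_or_lt_trans (hℓ.mul_right (a * t) b) (hℓ.mul_left a t)

lemma IsStrictLength.jTrivial (hℓ : IsStrictLength ℓ) (s t : M) (hst : JBelow s t)
    (hts : JBelow t s) : s = t := by
  rcases hℓ.eq_or_lt_of_jBelow hst with h | h
  · exact h
  rcases hℓ.eq_or_lt_of_jBelow hts with h' | h'
  · exact h'.symm
  · exact absurd (h.trans h') (lt_irrefl _)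

end StrictLength

structure FactorClosedSet (M : Type) [Mul M] where
  carrier : Set M
  mem_of_mul_mem_left : ∀ {x y : M}, x * y ∈ carrier → x ∈ carrier
  mem_of_mul_mem_right : ∀ {x y : M}, x * y ∈ carrier → y ∈ carrier

/-- The Rees quotient of `M` by the ideal `M \ G`. -/
def ReesQuotient {M : Type} [Mul M] (G : FactorClosedSet M) : Type := Option G.carrier

namespace ReesQuotient

variable {M : Type} [Semigroup M] {G : FactorClosedSet M}

instance [Finite G.carrier] : Finite (ReesQuotient G) :=
  inferInstanceAs (Finite (Option G.carrier))

instance : Zero (ReesQuotient G) := ⟨none⟩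

def of (x : G.carrier) : ReesQuotient G := some x

lemma of_injective : Function.Injective (of (G := G)) := Option.some_injective _

lemma eq_zero_or_eq_of (a : ReesQuotient G) : a = 0 ∨ ∃ x, a = of x := by
  rcases a with _ | x
  exacts [Or.inl rfl, Or.inr ⟨x, rfl⟩]

open scoped Classical in
variable (G) in
noncomputable def ofElem (m : M) : ReesQuotient G := if h : m ∈ G.carrier then of ⟨m, h⟩ else 0

lemma ofElem_of_mem {m : M} (h : m ∈ G.carrier) : ofElem G m = of ⟨m, h⟩ := dif_pos h

lemma ofElem_of_notMem {m : M} (h : m ∉ G.carrier) : ofElem G m = 0 := dif_neg h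

noncomputable instance : Mul (ReesQuotient G) where
  mul
    | some x, some y => ofElem G (x.1 * y.1)
    | _, _ => none

lemma of_mul_of (x y : G.carrier) : of x * of y = ofElem G (x.1 * y.1) := rfl

protected lemma zero_mul (a : ReesQuotient G) : 0 * a = 0 := rfl

protected lemma mul_zero (a : ReesQuotient G) : a * 0 = 0 := by cases a <;> rfl

lemma ofElem_mul_of (m : M) (z : G.carrier) : ofElem G m * of z = ofElem G (m * z.1) := by
  by_cases hm : m ∈ G.carrier
  · rw [ofElem_of_mem hm, of_mul_of]
  · rw [ofElem_of_notMem hm, ofElem_of_notMem (mt G.mem_of_mul_mem_left hm),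
      ReesQuotient.zero_mul]

lemma of_mul_ofElem (x : G.carrier) (m : M) : of x * ofElem G m = ofElem G (x.1 * m) := by
  by_cases hm : m ∈ G.carrier
  · rw [ofElem_of_mem hm, of_mul_of]
  · rw [ofElem_of_notMem hm, ofElem_of_notMem (mt G.mem_of_mul_mem_right hm),
      ReesQuotient.mul_zero]

noncomputable instance : SemigroupWithZero (ReesQuotient G) where
  zero_mul := ReesQuotient.zero_mul
  mul_zero := ReesQuotient.mul_zero
  mul_assoc a b c := by
    obtain rfl | ⟨x, rfl⟩ := eq_zero_or_eq_of a
    · rfl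
    obtain rfl | ⟨y, rfl⟩ := eq_zero_or_eq_of b
    · rfl
    obtain rfl | ⟨z, rfl⟩ := eq_zero_or_eq_of c
    · simp only [ReesQuotient.mul_zero]
    rw [of_mul_of, ofElem_mul_of, of_mul_of, of_mul_ofElem, mul_assoc]

variable (G) in
noncomputable def mk : M →ₙ* ReesQuotient G where
  toFun := ofElem G
  map_mul' x y := by
    by_cases hx : x ∈ G.carrier
    · rw [ofElem_of_mem hx, of_mul_ofElem]
    · rw [ofElem_of_notMem hx, ofElem_of_notMem (mt G.mem_of_mul_mem_left hx), zero_mul]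

lemma mk_injOn : Set.InjOn (mk G) G.carrier := by
  intro x hx y hy hxy
  have := of_injective ((ofElem_of_mem hx).symm.trans (hxy.trans (ofElem_of_mem hy)))
  exact congrArg Subtype.val this

def length {α : Type} (ℓ : M → α) : ReesQuotient G → WithTop α
  | none => ⊤
  | some x => ℓ x.1

section length

variable {α : Type} [Preorder α] {ℓ : M → α}

lemma length_of_lt_length_zero (y : G.carrier) :
    length ℓ (of y) < length ℓ (0 : ReesQuotient G) :=
  WithTop.coe_lt_top _

lemma ofElem_eq_or_length_lt {y : G.carrier} {m : M} (h : m = y.1 ∨ ℓ y.1 < ℓ m) :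
    ofElem G m = of y ∨ length ℓ (of y) < length ℓ (ofElem G m) := by
  by_cases hm : m ∈ G.carrier
  · rw [ofElem_of_mem hm]
    exact h.imp (fun h => congrArg of (Subtype.ext h)) WithTop.coe_lt_coe.mpr
  · rw [ofElem_of_notMem hm]
    exact Or.inr (length_of_lt_length_zero y)

lemma isStrictLength_length (hℓ : IsStrictLength ℓ) : IsStrictLength (length (G := G) ℓ) where
  mul_left a b := by
    obtain rfl | ⟨y, rfl⟩ := eq_zero_or_eq_of b
    · exact Or.inl (mul_zero a)
    obtain rfl | ⟨x, rfl⟩ := eq_zero_or_eq_of a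
    · exact Or.inr (length_of_lt_length_zero y)
    exact ofElem_eq_or_length_lt (hℓ.mul_left x y)
  mul_right a b := by
    obtain rfl | ⟨x, rfl⟩ := eq_zero_or_eq_of a
    · exact Or.inl (zero_mul b)
    obtain rfl | ⟨y, rfl⟩ := eq_zero_or_eq_of b
    · exact Or.inr (length_of_lt_length_zero x)
    exact ofElem_eq_or_length_lt (hℓ.mul_right x y)

end length

end ReesQuotient

namespace List

variable {I : Type} [DecidableEq I]

def mergeAppend (u v : List I) : List I := u ++ if u.getLast? = v.head? then v.tail else v

@[simp] lemma nil_mergeAppend (v : List I) : mergeAppend [] v = v := by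
  cases v <;> simp [mergeAppend]

@[simp] lemma mergeAppend_nil (u : List I) : mergeAppend u [] = u := by
  cases h : u.getLast? <;> simp_all [mergeAppend]

lemma head?_mergeAppend {u : List I} (hu : u ≠ []) (v : List I) :
    (mergeAppend u v).head? = u.head? := by
  obtain ⟨a, t, rfl⟩ := exists_cons_of_ne_nil hu
  simp [mergeAppend]

lemma getLast?_mergeAppend (u : List I) {v : List I} (hv : v ≠ []) :
    (mergeAppend u v).getLast? = v.getLast? := by
  obtain ⟨a, t, rfl⟩ := exists_cons_of_ne_nil hv
  by_cases h : u.getLast? = some a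
  · simp only [mergeAppend, head?_cons, h, if_true, tail_cons, getLast?_append,
      getLast?_cons]
    cases t.getLast? <;> rfl
  · simp only [mergeAppend, head?_cons, h, if_false, getLast?_append,
      getLast?_cons, Option.some_or]

lemma tail_mergeAppend {u : List I} (hu : u ≠ []) (v : List I) :
    (mergeAppend u v).tail = u.tail ++ if u.getLast? = v.head? then v.tail else v := by
  obtain ⟨a, t, rfl⟩ := exists_cons_of_ne_nil hu
  simp [mergeAppend]

lemma mergeAppend_assoc (u v w : List I) :
    mergeAppend (mergeAppend u v) w = mergeAppend u (mergeAppend v w) := by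
  rcases eq_or_ne u [] with rfl | hu
  · simp
  rcases eq_or_ne v [] with rfl | hv
  · simp
  rcases eq_or_ne w [] with rfl | hw
  · simp
  conv_lhs => rw [mergeAppend, getLast?_mergeAppend u hv]
  conv_rhs => rw [mergeAppend, head?_mergeAppend hv, tail_mergeAppend hv]
  unfold mergeAppend
  split_ifs <;> simp

lemma mergeAppend_eq_right_or_length_lt (u v : List I) :
    mergeAppend u v = v ∨ v.length < (mergeAppend u v).length := by
  rcases eq_or_ne u [] with rfl | hu
  · exact Or.inl (nil_mergeAppend v)
  obtain ⟨b, u', rfl⟩ := exists_cons_of_ne_nil hu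
  rcases eq_or_ne u' [] with rfl | hu'
  · by_cases h : some b = v.head?
    · obtain ⟨t, rfl⟩ := head?_eq_some_iff.mp h.symm
      simp [mergeAppend]
    · simp [mergeAppend, h]
  · right
    have : 0 < u'.length := length_pos_iff.mpr hu'
    unfold mergeAppend
    split_ifs <;> simp only [length_append, length_cons, length_tail] <;> omega

lemma mergeAppend_eq_left_or_length_lt (u v : List I) :
    mergeAppend u v = u ∨ u.length < (mergeAppend u v).length := by
  rcases eq_or_ne v [] with rfl | hv
  · exact Or.inl (mergeAppend_nil u)
  obtain ⟨c, t, rfl⟩ := exists_cons_of_ne_nil hv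
  unfold mergeAppend
  split_ifs
  · rcases eq_or_ne t [] with rfl | ht
    · simp
    · exact Or.inr (by simpa using length_pos_iff.mpr ht)
  · simp

lemma mem_mergeAppend_of_mem_left {u : List I} {x : I} (hx : x ∈ u) (v : List I) :
    x ∈ mergeAppend u v :=
  mem_append_left _ hx

lemma mem_mergeAppend_of_mem_right (u : List I) {v : List I} {x : I} (hx : x ∈ v) :
    x ∈ mergeAppend u v := by
  unfold mergeAppend
  split_ifs with h
  · obtain ⟨c, t, rfl⟩ := exists_cons_of_ne_nil (ne_nil_of_mem hx)
    rcases mem_cons.mp hx with rfl | hx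
    · exact mem_append_left _ (mem_of_getLast? h)
    · exact mem_append_right _ hx
  · exact mem_append_right _ hx

lemma prod_map_mergeAppend {N : Type} [Monoid N] {f : I → N} (hf : ∀ i, IsIdempotentElem (f i))
    (u v : List I) : ((mergeAppend u v).map f).prod = (u.map f).prod * (v.map f).prod := by
  unfold mergeAppend
  split_ifs with h
  · rcases v with _ | ⟨c, t⟩
    · simp
    obtain ⟨u', rfl⟩ := getLast?_eq_some_iff.mp h
    simp [mul_assoc, (hf c).mul_self_mul]
  · simp

end List

/-- Words over `I` multiplied by `List.mergeAppend`. The words without two equal adjacent letters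
form the monoid presented by `⟨I | i * i = i⟩`; the other words play no role. -/
def IdemWord (I : Type) : Type := List I

namespace IdemWord

variable {I : Type} [DecidableEq I]

instance : Monoid (IdemWord I) where
  mul := List.mergeAppend
  one := ([] : List I)
  mul_assoc := List.mergeAppend_assoc
  one_mul := List.nil_mergeAppend
  mul_one := List.mergeAppend_nil

def of (i : I) : IdemWord I := [i]

lemma isIdempotentElem_of (i : I) : IsIdempotentElem (of i) := by
  show List.mergeAppend [i] [i] = [i]
  simp [List.mergeAppend]

def lift {N : Type} [Monoid N] (f : I → N) (hf : ∀ i, IsIdempotentElem (f i)) :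
    IdemWord I →* N where
  toFun u := (List.map f u).prod
  map_one' := rfl
  map_mul' := List.prod_map_mergeAppend hf

def toList : IdemWord I → List I := id

def length (u : IdemWord I) : ℕ := u.toList.length

lemma isStrictLength_length : IsStrictLength (length (I := I)) :=
  ⟨List.mergeAppend_eq_right_or_length_lt, List.mergeAppend_eq_left_or_length_lt⟩

def bounded (N : ℕ) (A : Set I) : FactorClosedSet (IdemWord I) where
  carrier := {u : List I | u.length ≤ N ∧ ∀ x ∈ u, x ∈ A}
  mem_of_mul_mem_left {u v} h :=
    ⟨(isStrictLength_length.le_mul_right u v).trans h.1,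
      fun x hx => h.2 x (List.mem_mergeAppend_of_mem_left hx v)⟩
  mem_of_mul_mem_right {u v} h :=
    ⟨(isStrictLength_length.le_mul_left u v).trans h.1,
      fun x hx => h.2 x (List.mem_mergeAppend_of_mem_right u hx)⟩

lemma finite_bounded (N : ℕ) {A : Set I} (hA : A.Finite) : (bounded N A).carrier.Finite := by
  have := hA.to_subtype
  refine ((List.finite_length_le A N).image (List.map Subtype.val)).subset ?_
  rintro (u : List I) ⟨hlen, hmem⟩
  lift u to List A using hmem
  exact ⟨u, by simpa using hlen, rfl⟩

lemma jTrivial_reesQuotient (G : FactorClosedSet (IdemWord I)) (s t : ReesQuotient G) :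
    JBelow s t → JBelow t s → s = t :=
  (ReesQuotient.isStrictLength_length isStrictLength_length).jTrivial s t

lemma eq_of_forall_reesQuotient_mk_eq {u v : IdemWord I}
    (h : ∀ G : FactorClosedSet (IdemWord I), G.carrier.Finite →
      ReesQuotient.mk G u = ReesQuotient.mk G v) : u = v := by
  let A : Set I := {x | x ∈ u.toList ∨ x ∈ v.toList}
  let G := bounded (max (length u) (length v)) A
  have hu : u ∈ G.carrier := ⟨le_max_left _ _, fun x hx => Or.inl hx⟩
  have hv : v ∈ G.carrier := ⟨le_max_right _ _, fun x hx => Or.inr hx⟩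
  have hA : A.Finite := (List.finite_toSet u).union (List.finite_toSet v)
  exact ReesQuotient.mk_injOn hu hv (h G (finite_bounded _ hA))

end IdemWord

def IsIdempotentElem.constMulHom {M : Type} [Mul M] {a : M} (ha : IsIdempotentElem a)
    (S : Type) [Mul S] : S →ₙ* M where
  toFun _ := a
  map_mul' _ _ := ha.symm

section FreeProduct

variable {I : Type} {S : I → Type} [∀ i, Semigroup (S i)] {P : Type} [Semigroup P]
  {e : ∀ i, S i →ₙ* P}

lemma IsFreeProduct.hom_ext (hP : IsFreeProduct S P e) {T : Type} [Semigroup T]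
    {F F' : P →ₙ* T} (h : ∀ i, F.comp (e i) = F'.comp (e i)) : F = F' :=
  (hP.universal T fun i => F'.comp (e i)).unique h fun _ => rfl

/-- Sending each word to its product in `P^I` is a left inverse. -/
lemma IsFreeProduct.injective_of_subsingleton [DecidableEq I] (hP : IsFreeProduct S P e)
    (h1 : ∀ i, Nonempty (S i)) (h2 : ∀ i, Subsingleton (S i)) {Φ : P →ₙ* IdemWord I}
    (hΦ : ∀ i (y : S i), Φ (e i y) = IdemWord.of i) : Function.Injective Φ := by
  let x i := (h1 i).some
  have idem i : IsIdempotentElem (e i (x i)) := by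
    rw [IsIdempotentElem, ← map_mul, (h2 i).elim (x i * x i) (x i)]
  let σ := IdemWord.lift (fun i => (e i (x i) : WithOne P))
    fun i => (idem i).map WithOne.coeMulHom
  have hσΦ : σ.toMulHom.comp Φ = WithOne.coeMulHom := hP.hom_ext fun i => MulHom.ext fun y => by
    simp only [MulHom.comp_apply, hΦ, σ, (h2 i).elim y (x i)]
    rfl
  refine Function.Injective.of_comp (f := σ) ?_
  rw [show ⇑σ ∘ ⇑Φ = ((↑) : P → WithOne P) from congrArg DFunLike.coe hσΦ]
  exact WithOne.coe_injective

end FreeProduct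

lemma continuousDisc_of_subsingleton {S T : Type} [TopologicalSpace S] [Subsingleton S]
    (f : S → T) : ContinuousDisc f :=
  @continuous_of_const _ _ _ ⊥ f fun x y => congrArg f (Subsingleton.elim x y)

lemma isProV_discTopSgr {V : Pseudovariety} {Q : Type} [Semigroup Q] [Finite Q]
    (hQ : V.Mem Q) : IsProV V (discTopSgr Q) := by
  have : Finite (discTopSgr Q).carrier := ‹Finite Q›
  have : DiscreteTopology (discTopSgr Q).carrier := ⟨rfl⟩
  exact ⟨Finite.compactSpace, inferInstance, ⟨continuous_of_discreteTopology⟩,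
    fun a b hab => ⟨⟨Q, hQ⟩, MulHom.id _, continuous_id, hab⟩⟩

lemma IsCoproduct.exists_comp_iota_eq {V : Pseudovariety} {I : Type} {S : I → TopSgr}
    {P : Type} [Semigroup P] {e : ∀ i, (S i).carrier →ₙ* P}
    (hP : IsFreeProduct (fun i => (S i).carrier) P e) {C : TopSgr}
    {φ : ∀ i, (S i).carrier →ₙ* C.carrier} (hC : IsCoproduct V S C φ) {ι : P →ₙ* C.carrier}
    (hι : ∀ i, ι.comp (e i) = φ i) {Q : Type} [Semigroup Q] [Finite Q] (hQ : V.Mem Q)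
    (τ : P →ₙ* Q) (hτ : ∀ i, ContinuousDisc (τ.comp (e i))) :
    ∃ Ψ : C.carrier →ₙ* Q, Ψ.comp ι = τ := by
  obtain ⟨Ψ, ⟨-, hΨ⟩, -⟩ :=
    hC.universal (discTopSgr Q) (isProV_discTopSgr hQ) (fun i => τ.comp (e i)) hτ
  refine ⟨Ψ, hP.hom_ext fun i => MulHom.ext fun y => ?_⟩
  exact DFunLike.congr_fun ((congrArg Ψ.comp (hι i)).trans (hΨ i)) y

theorem injective_iota_trivial_factors_general (V : Pseudovariety) (hJ : ContainsJ V)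
    {I : Type} (S : I → TopSgr)
    (h1 : ∀ i, Nonempty (S i).carrier) (h2 : ∀ i, Subsingleton (S i).carrier)
    (P : Type) [Semigroup P] (e : ∀ i, (S i).carrier →ₙ* P)
    (hP : IsFreeProduct (fun i => (S i).carrier) P e)
    (C : TopSgr) (φ : ∀ i, (S i).carrier →ₙ* C.carrier) (hC : IsCoproduct V S C φ)
    (ι : P →ₙ* C.carrier) (hι : ∀ i, ι.comp (e i) = φ i) :
    Function.Injective ⇑ι := by
  classical
  obtain ⟨Φ, hΦ, -⟩ :=
    hP.universal (IdemWord I) fun i => (IdemWord.isIdempotentElem_of i).constMulHom _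
  have hΦinj := hP.injective_of_subsingleton h1 h2 fun i y => DFunLike.congr_fun (hΦ i) y
  intro p q hpq
  refine hΦinj (IdemWord.eq_of_forall_reesQuotient_mk_eq fun G hG => ?_)
  have := hG.to_subtype
  obtain ⟨Ψ, hΨ⟩ := hC.exists_comp_iota_eq hP hι (hJ _ (IdemWord.jTrivial_reesQuotient G))
    ((ReesQuotient.mk G).comp Φ)
    fun i => continuousDisc_of_subsingleton _
  calc ReesQuotient.mk G (Φ p) = Ψ (ι p) := (DFunLike.congr_fun hΨ p).symm
    _ = Ψ (ι q) := by rw [hpq]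
    _ = ReesQuotient.mk G (Φ q) := DFunLike.congr_fun hΨ q

/-- If `V ⊇ J`, the natural mapping from the free product of a family of
one-element semigroups to its `V`-coproduct is injective. -/
theorem injective_iota_trivial_factors (V : Pseudovariety) (hJ : ContainsJ V)
    {I : Type} [Nonempty I] (S : I → TopSgr) (hS : ∀ i, IsProV V (S i))
    (h1 : ∀ i, Nonempty (S i).carrier) (h2 : ∀ i, Subsingleton (S i).carrier)
    (P : Type) [Semigroup P] (e : ∀ i, (S i).carrier →ₙ* P)
    (hP : IsFreeProduct (fun i => (S i).carrier) P e)
    (C : TopSgr) (φ : ∀ i, (S i).carrier →ₙ* C.carrier) (hC : IsCoproduct V S C φ)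
    (ι : P →ₙ* C.carrier) (hι : ∀ i, ι.comp (e i) = φ i) :
    Function.Injective ⇑ι :=
  injective_iota_trivial_factors_general V hJ S h1 h2 P e hP C φ hC ι hι
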